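/- arXiv:0911.0606 — 2 statements merged into one kernel-verified Lean document; each statement's English description precedes it below -/
import Mathlib

section
/- Let A be a bounded operator on ℓ² with matrix (a(i,j)), and let a : ℕ × ℕ → ℂ be the function a(i,j) = ⟪A e_j, e_i⟫. Then a is a Schur multiplier and ‖a‖_m ≤ ‖A‖_op, where ‖A‖_op is the operator norm of A. -/
open scoped InnerProductSpace

noncomputable section

/-- The Hilbert space `ℓ² = ℓ²(ℕ, ℂ)`. -/
abbrev l2 : Type := lp (fun _ : ℕ => ℂ) 2

/-- The standard orthonormal basis vector `e i` of `ℓ²`. -/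
def e (i : ℕ) : l2 := lp.single 2 i 1

/-- The matrix entry `a(i,j) = ⟪A e_j, e_i⟫` of a bounded operator `A` on `ℓ²`. -/
def ent (A : l2 →L[ℂ] l2) (i j : ℕ) : ℂ := ⟪A (e j), e i⟫_ℂ

/-- A function `φ : ℕ × ℕ → ℂ` is a Schur multiplier if for every bounded operator `A` on
`ℓ²` there is a bounded operator on `ℓ²` whose matrix is `(φ(i,j) * a(i,j))`. -/
def IsSchurMultiplier (φ : ℕ × ℕ → ℂ) : Prop :=
  ∀ A : l2 →L[ℂ] l2, ∃ B : l2 →L[ℂ] l2, ∀ i j, ent B i j = φ (i, j) * ent A i j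

/-! The Schur product of the matrices of `A` and `T` is a compression of `A ⊗ T`. In
`ℓ²(ι × ι) ≅ ℓ²(ι) ⊗ ℓ²(ι)` put `U_A ξ = ∑ⱼ ξⱼ eⱼ ⊗ A eⱼ` and `W_T η = ∑ᵢ ηᵢ T⋆eᵢ ⊗ eᵢ`. Then
`⟪W_T⋆ U_A eⱼ, eᵢ⟫ = ⟪eⱼ ⊗ A eⱼ, T⋆eᵢ ⊗ eᵢ⟫ = ⟪A eⱼ, eᵢ⟫ ⟪T eⱼ, eᵢ⟫`, so `T ↦ W_T⋆ U_A` is the Schur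
multiplier. Since `‖U_A ξ‖² = ∑ⱼ |ξⱼ|² ‖A eⱼ‖² ≤ ‖A‖² ‖ξ‖²` and likewise `‖W_T‖ ≤ ‖T⋆‖ = ‖T‖`,
its norm is at most `‖A‖`. -/

open scoped ENNReal lp

namespace lp

variable {ι κ : Type*}

section Norm

variable {E : ι → Type*} [∀ i, NormedAddCommGroup (E i)]

theorem memℓp_two_iff {f : ∀ i, E i} : Memℓp f 2 ↔ Summable fun i => ‖f i‖ ^ 2 := by
  simpa using memℓp_gen_iff (p := 2) (f := f) (by norm_num)

theorem summable_norm_sq (f : lp E 2) : Summable fun i => ‖f i‖ ^ 2 :=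
  memℓp_two_iff.1 f.2

theorem norm_sq_eq_tsum (f : lp E 2) : ‖f‖ ^ 2 = ∑' i, ‖f i‖ ^ 2 := by
  simpa using norm_rpow_eq_tsum (p := 2) (by norm_num) f

end Norm

variable {𝕜 E : Type*} [NormedField 𝕜] [NormedAddCommGroup E] [NormedSpace 𝕜 E]
  {p : ℝ≥0∞} [Fact (1 ≤ p)]

def reindex (hp : 0 < p.toReal) (σ : ι ≃ κ) :
    lp (fun _ : ι => E) p →ₗᵢ[𝕜] lp (fun _ : κ => E) p where
  toFun f := ⟨f ∘ σ.symm,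
    (memℓp_gen_iff hp).2 <| σ.symm.summable_iff.2 <| (memℓp_gen_iff hp).1 f.2⟩
  map_add' _ _ := rfl
  map_smul' _ _ := rfl
  norm_map' f := by
    simp only [norm_eq_tsum_rpow hp]
    exact congrArg (· ^ (1 / p.toReal)) (σ.symm.tsum_eq fun i => ‖f i‖ ^ p.toReal)

theorem apply_eq_inner_single {𝕜 : Type*} [RCLike 𝕜] [DecidableEq ι] (f : ℓ²(ι, 𝕜)) (i : ι) :
    f i = ⟪lp.single 2 i (1 : 𝕜), f⟫_𝕜 := by
  simp [inner_single_left]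

end lp

section SchurProduct

open ContinuousLinearMap

variable {𝕜 ι κ : Type*} [RCLike 𝕜] [DecidableEq ι]

theorem norm_apply_single_one_le (B : ℓ²(ι, 𝕜) →L[𝕜] ℓ²(κ, 𝕜)) (j : ι) :
    ‖B (lp.single 2 j 1)‖ ≤ ‖B‖ :=
  (B.le_opNorm _).trans_eq (by rw [lp.norm_single (by norm_num), norm_one, mul_one])

theorem norm_sq_mul_norm_apply_single_sq_le (B : ℓ²(ι, 𝕜) →L[𝕜] ℓ²(κ, 𝕜)) (ξ : ℓ²(ι, 𝕜))
    (j : ι) :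
    ‖ξ j‖ ^ 2 * ‖B (lp.single 2 j 1)‖ ^ 2 ≤ ‖B‖ ^ 2 * ‖ξ j‖ ^ 2 := by
  rw [mul_comm (‖B‖ ^ 2)]
  gcongr
  exact norm_apply_single_one_le B j

theorem summable_norm_sq_mul_norm_apply_single_sq (B : ℓ²(ι, 𝕜) →L[𝕜] ℓ²(κ, 𝕜))
    (ξ : ℓ²(ι, 𝕜)) : Summable fun j => ‖ξ j‖ ^ 2 * ‖B (lp.single 2 j 1)‖ ^ 2 :=
  ((lp.summable_norm_sq ξ).mul_left (‖B‖ ^ 2)).of_nonneg_of_le (fun _ => by positivity)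
    (norm_sq_mul_norm_apply_single_sq_le B ξ)

theorem tsum_norm_sq_mul_norm_apply_single_sq_le (B : ℓ²(ι, 𝕜) →L[𝕜] ℓ²(κ, 𝕜))
    (ξ : ℓ²(ι, 𝕜)) : ∑' j, ‖ξ j‖ ^ 2 * ‖B (lp.single 2 j 1)‖ ^ 2 ≤ (‖B‖ * ‖ξ‖) ^ 2 := by
  rw [mul_pow, lp.norm_sq_eq_tsum, ← tsum_mul_left]
  exact (summable_norm_sq_mul_norm_apply_single_sq B ξ).tsum_le_tsum
    (norm_sq_mul_norm_apply_single_sq_le B ξ) ((lp.summable_norm_sq ξ).mul_left _)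

/-- The coefficients of `∑ j, ξ j • (e j ⊗ B (e j))` under `ℓ²(ι) ⊗ ℓ²(κ) ≅ ℓ²(ι × κ)`. -/
def diagTensorCoeff (B : ℓ²(ι, 𝕜) →L[𝕜] ℓ²(κ, 𝕜)) (ξ : ℓ²(ι, 𝕜)) (p : ι × κ) : 𝕜 :=
  ξ p.1 * B (lp.single 2 p.1 1) p.2

theorem hasSum_norm_sq_diagTensorCoeff (B : ℓ²(ι, 𝕜) →L[𝕜] ℓ²(κ, 𝕜)) (ξ : ℓ²(ι, 𝕜)) :
    HasSum (fun p => ‖diagTensorCoeff B ξ p‖ ^ 2)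
      (∑' j, ‖ξ j‖ ^ 2 * ‖B (lp.single 2 j 1)‖ ^ 2) := by
  have hrow : ∀ j, HasSum (fun i => ‖diagTensorCoeff B ξ (j, i)‖ ^ 2)
      (‖ξ j‖ ^ 2 * ‖B (lp.single 2 j 1)‖ ^ 2) := fun j => by
    simp only [diagTensorCoeff, norm_mul, mul_pow, lp.norm_sq_eq_tsum]
    exact (lp.summable_norm_sq _).hasSum.mul_left _
  have hsum : Summable fun p => ‖diagTensorCoeff B ξ p‖ ^ 2 :=
    (summable_prod_of_nonneg fun _ => by positivity).2 ⟨fun j => (hrow j).summable,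
      (summable_norm_sq_mul_norm_apply_single_sq B ξ).congr fun j => (hrow j).tsum_eq.symm⟩
  rw [(hsum.hasSum.prod_fiberwise hrow).tsum_eq]
  exact hsum.hasSum

def diagTensor : (ℓ²(ι, 𝕜) →L[𝕜] ℓ²(κ, 𝕜)) →L[𝕜] ℓ²(ι, 𝕜) →L[𝕜] ℓ²(ι × κ, 𝕜) :=
  LinearMap.mkContinuous₂
    (LinearMap.mk₂ 𝕜
      (fun B ξ => ⟨diagTensorCoeff B ξ,
        lp.memℓp_two_iff.2 (hasSum_norm_sq_diagTensorCoeff B ξ).summable⟩)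
      (fun _ _ _ => lp.ext <| funext fun _ => mul_add _ _ _)
      (fun _ _ _ => lp.ext <| funext fun _ => mul_left_comm _ _ _)
      (fun _ _ _ => lp.ext <| funext fun _ => add_mul _ _ _)
      (fun _ _ _ => lp.ext <| funext fun _ => mul_assoc _ _ _))
    1 fun B ξ => by
      rw [one_mul]
      refine le_of_pow_le_pow_left₀ two_ne_zero (by positivity) ?_
      rw [lp.norm_sq_eq_tsum]
      exact (hasSum_norm_sq_diagTensorCoeff B ξ).tsum_eq.trans_le
        (tsum_norm_sq_mul_norm_apply_single_sq_le B ξ)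

@[simp]
theorem diagTensor_apply (B : ℓ²(ι, 𝕜) →L[𝕜] ℓ²(κ, 𝕜)) (ξ : ℓ²(ι, 𝕜)) (p : ι × κ) :
    diagTensor B ξ p = ξ p.1 * B (lp.single 2 p.1 1) p.2 := rfl

theorem norm_diagTensor_apply_le (B : ℓ²(ι, 𝕜) →L[𝕜] ℓ²(κ, 𝕜)) : ‖diagTensor B‖ ≤ ‖B‖ :=
  calc ‖diagTensor B‖ ≤ ‖(diagTensor : (ℓ²(ι, 𝕜) →L[𝕜] ℓ²(κ, 𝕜)) →L[𝕜] _)‖ * ‖B‖ :=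
        le_opNorm _ _
    _ ≤ 1 * ‖B‖ := by gcongr; exact LinearMap.mkContinuous₂_norm_le _ zero_le_one _
    _ = ‖B‖ := one_mul _

def diagTensorSwap (B : ℓ²(ι, 𝕜) →L[𝕜] ℓ²(ι, 𝕜)) : ℓ²(ι, 𝕜) →L[𝕜] ℓ²(ι × ι, 𝕜) :=
  (lp.reindex (by norm_num) (Equiv.prodComm ι ι)).toContinuousLinearMap ∘L diagTensor B

theorem norm_diagTensorSwap_le (B : ℓ²(ι, 𝕜) →L[𝕜] ℓ²(ι, 𝕜)) : ‖diagTensorSwap B‖ ≤ ‖B‖ :=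
  calc ‖diagTensorSwap B‖ ≤ 1 * ‖diagTensor B‖ :=
        (opNorm_comp_le _ _).trans <| by
          gcongr; exact LinearIsometry.norm_toContinuousLinearMap_le _
    _ ≤ ‖B‖ := (one_mul _).trans_le (norm_diagTensor_apply_le B)

@[simp]
theorem diagTensorSwap_apply (B : ℓ²(ι, 𝕜) →L[𝕜] ℓ²(ι, 𝕜)) (η : ℓ²(ι, 𝕜)) (p : ι × ι) :
    diagTensorSwap B η p = η p.2 * B (lp.single 2 p.2 1) p.1 := rfl

def schurMul (A : ℓ²(ι, 𝕜) →L[𝕜] ℓ²(ι, 𝕜)) :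
    (ℓ²(ι, 𝕜) →L[𝕜] ℓ²(ι, 𝕜)) →L[𝕜] ℓ²(ι, 𝕜) →L[𝕜] ℓ²(ι, 𝕜) :=
  LinearMap.mkContinuous
    { toFun T := adjoint (diagTensorSwap (adjoint T)) ∘L diagTensor A
      map_add' T T' := by simp [diagTensorSwap, add_comp, comp_add]
      map_smul' c T := by
        simp only [diagTensorSwap, map_smulₛₗ, comp_smulₛₗ, smul_comp, RingHom.id_apply,
          starRingEnd_self_apply] }
    ‖A‖ fun T =>
      calc ‖adjoint (diagTensorSwap (adjoint T)) ∘L diagTensor A‖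
          ≤ ‖adjoint (diagTensorSwap (adjoint T))‖ * ‖diagTensor A‖ := opNorm_comp_le _ _
        _ ≤ ‖T‖ * ‖A‖ := by
          rw [LinearIsometryEquiv.norm_map]
          gcongr
          · exact (norm_diagTensorSwap_le _).trans_eq (LinearIsometryEquiv.norm_map _ _)
          · exact norm_diagTensor_apply_le A
        _ = ‖A‖ * ‖T‖ := mul_comm _ _

theorem norm_schurMul_le (A : ℓ²(ι, 𝕜) →L[𝕜] ℓ²(ι, 𝕜)) : ‖schurMul A‖ ≤ ‖A‖ :=
  LinearMap.mkContinuous_norm_le _ (norm_nonneg A) _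

theorem inner_schurMul_apply_single (A T : ℓ²(ι, 𝕜) →L[𝕜] ℓ²(ι, 𝕜)) (i j : ι) :
    ⟪schurMul A T (lp.single 2 j 1), lp.single 2 i 1⟫_𝕜 =
      ⟪A (lp.single 2 j 1), lp.single 2 i 1⟫_𝕜 * ⟪T (lp.single 2 j 1), lp.single 2 i 1⟫_𝕜 := by
  change ⟪adjoint (diagTensorSwap (adjoint T)) (diagTensor A (lp.single 2 j 1)), _⟫_𝕜 = _
  rw [adjoint_inner_left, lp.inner_eq_tsum, tsum_eq_single (j, i)]
  · simp only [diagTensor_apply, diagTensorSwap_apply, lp.single_apply_self, one_mul]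
    rw [lp.apply_eq_inner_single (A _) i, lp.apply_eq_inner_single (adjoint T _) j,
      adjoint_inner_right, RCLike.inner_apply, inner_conj_symm, mul_comm]
  · rintro ⟨j', i'⟩ hne
    rcases eq_or_ne j' j with rfl | hj
    · have hi : i' ≠ i := fun h => hne (h ▸ rfl)
      simp only [diagTensorSwap_apply, lp.single_apply_ne 2 i 1 hi, zero_mul, inner_zero_right]
    · simp only [diagTensor_apply, lp.single_apply_ne 2 j 1 hj, zero_mul, inner_zero_left]

end SchurProduct

/-- For a bounded operator `A` on `ℓ²`, the function `a(i,j) = ⟪A e_j, e_i⟫`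
is a Schur multiplier, and `‖a‖_m ≤ ‖A‖_op`: there is a bounded linear map `S` on `B(ℓ²)`
realising the Schur multiplication by `a` with `‖S‖ ≤ ‖A‖`. -/
theorem matrix_of_operator_is_schur_multiplier (A : l2 →L[ℂ] l2) :
    IsSchurMultiplier (fun p : ℕ × ℕ => ent A p.1 p.2) ∧
    ∃ S : (l2 →L[ℂ] l2) →L[ℂ] (l2 →L[ℂ] l2),
      (∀ T : l2 →L[ℂ] l2, ∀ i j, ent (S T) i j = ent A i j * ent T i j) ∧ ‖S‖ ≤ ‖A‖ := by
  have hent : ∀ T : l2 →L[ℂ] l2, ∀ i j, ent (schurMul A T) i j = ent A i j * ent T i j :=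
    fun T i j => inner_schurMul_apply_single A T i j
  exact ⟨fun T => ⟨schurMul A T, hent T⟩, schurMul A, hent, norm_schurMul_le A⟩

end
end

section
/- Let Δ = {(i,j) ∈ ℕ × ℕ : j ≤ i}. Then the characteristic function χ_Δ of Δ is not a Schur multiplier; that is, there exists a bounded operator A on ℓ² such that no bounded operator on ℓ² has matrix (χ_Δ(i,j)·⟪A e_j, e_i⟫). In particular, there are bounded functions on ℕ × ℕ that are not Schur multipliers. -/
open scoped InnerProductSpace

noncomputable section

open MeasureTheory AddCircle Finset
open scoped Real ENNReal ComplexConjugate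

/-!
The witness is the Toeplitz operator `A = V* M V`, where `M` is multiplication by the sawtooth
`B₁(x) = {x} - 1/2` on `L²(ℝ/ℤ)` and the isometry `V` sends `e_n` to `e^{2πinx}`. It is bounded because
`B₁` is, and since `B̂₁(n) = -1/(2πin)` its matrix entries are `1/(2πi(i - j))`. If the lower
triangular truncation `B` of `A` were bounded, testing it on `x = e₀ + ⋯ + e_{n-1}` would give
`(2π)⁻¹ ∑_{i<n} H_i = |⟪B x, x⟫| ≤ ‖B‖ ‖x‖² = ‖B‖ n`, with `H_i` the harmonic numbers; but the
left side grows like `n log n`.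
-/

lemma orthonormal_e : Orthonormal ℂ e := by
  rw [orthonormal_iff_ite]
  intro i j
  simp [e, lp.inner_single_left, lp.single_apply, Pi.single_apply]

lemma norm_sum_e_sq (n : ℕ) : ‖∑ j ∈ range n, e j‖ ^ 2 = n := by
  have := orthonormal_e.inner_sum (fun _ => 1) (fun _ => 1) (range n)
  simp only [one_smul, map_one, mul_one, sum_const, card_range, nsmul_eq_mul] at this
  rw [inner_self_eq_norm_sq_to_K, ← Complex.ofReal_natCast] at this
  exact Complex.ofReal_injective (by simpa using this)

lemma sum_ent_eq_inner (B : l2 →L[ℂ] l2) (n : ℕ) :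
    ∑ i ∈ range n, ∑ j ∈ range n, ent B i j = ⟪B (∑ j ∈ range n, e j), ∑ i ∈ range n, e i⟫_ℂ := by
  simp only [map_sum, sum_inner, inner_sum, ent]

lemma norm_sum_ent_le (B : l2 →L[ℂ] l2) (n : ℕ) :
    ‖∑ i ∈ range n, ∑ j ∈ range n, ent B i j‖ ≤ ‖B‖ * n := by
  set x := ∑ j ∈ range n, e j
  calc ‖∑ i ∈ range n, ∑ j ∈ range n, ent B i j‖ = ‖⟪B x, x⟫_ℂ‖ := by rw [sum_ent_eq_inner]
    _ ≤ ‖B x‖ * ‖x‖ := norm_inner_le_norm _ _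
    _ ≤ ‖B‖ * ‖x‖ * ‖x‖ := by gcongr; exact B.le_opNorm x
    _ = ‖B‖ * n := by rw [mul_assoc, ← sq, norm_sum_e_sq]

section Compression

variable {E : Type*} [NormedAddCommGroup E] [InnerProductSpace ℂ E] [CompleteSpace E] {v : ℕ → E}

def Orthonormal.compression (hv : Orthonormal ℂ v) (L : E →L[ℂ] E) : l2 →L[ℂ] l2 :=
  let V := hv.orthogonalFamily.linearIsometry.toContinuousLinearMap
  V.adjoint ∘L L ∘L V

lemma Orthonormal.ent_compression (hv : Orthonormal ℂ v) (L : E →L[ℂ] E) (i j : ℕ) :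
    ent (hv.compression L) i j = ⟪L (v j), v i⟫_ℂ := by
  have hV : ∀ k, hv.orthogonalFamily.linearIsometry (e k) = v k := fun k => by
    rw [e, OrthogonalFamily.linearIsometry_apply_single, LinearIsometry.toSpanSingleton_apply,
      one_smul]
  simp only [ent, compression, ContinuousLinearMap.comp_apply,
    ContinuousLinearMap.adjoint_inner_left, LinearIsometry.coe_toContinuousLinearMap, hV]

end Compression

section Toeplitz

variable {T : ℝ} [Fact (0 < T)]

lemma orthonormal_fourierLp_natCast :
    Orthonormal ℂ fun n : ℕ => fourierLp (T := T) 2 (n : ℤ) :=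
  orthonormal_fourier.comp _ Nat.cast_injective

def mulOp (g : Lp ℂ ∞ (haarAddCircle (T := T))) :
    Lp ℂ 2 (haarAddCircle (T := T)) →L[ℂ] Lp ℂ 2 (haarAddCircle (T := T)) :=
  (ContinuousLinearMap.mul ℂ ℂ).holderL _ ∞ 2 2 g

lemma inner_fourierLp_mulOp (g : Lp ℂ ∞ (haarAddCircle (T := T))) (i j : ℤ) :
    ⟪fourierLp 2 i, mulOp g (fourierLp 2 j)⟫_ℂ = fourierCoeff g (i - j) := by
  rw [L2.inner_def, fourierCoeff]
  apply integral_congr_ae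
  filter_upwards [(ContinuousLinearMap.mul ℂ ℂ).coeFn_holder (r := 2) g (fourierLp 2 j),
    coeFn_fourierLp 2 i, coeFn_fourierLp 2 j] with x hg hi hj
  rw [mulOp, ContinuousLinearMap.holderL_apply_apply, hg, hi, hj, RCLike.inner_apply,
    ContinuousLinearMap.mul_apply', smul_eq_mul, ← fourier_neg, neg_sub, sub_eq_add_neg,
    fourier_add]
  ring

def toeplitz (g : Lp ℂ ∞ (haarAddCircle (T := T))) : l2 →L[ℂ] l2 :=
  orthonormal_fourierLp_natCast.compression (mulOp g)

lemma ent_toeplitz (g : Lp ℂ ∞ (haarAddCircle (T := T))) (i j : ℕ) :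
    ent (toeplitz g) i j = conj (fourierCoeff g ((i : ℤ) - j)) := by
  rw [toeplitz, Orthonormal.ent_compression, ← inner_conj_symm, inner_fourierLp_mulOp]

end Toeplitz

lemma AddCircle.measurable_liftIco {T : ℝ} [Fact (0 < T)] (a : ℝ) {β : Type*}
    [MeasurableSpace β] {f : ℝ → β} (hf : Measurable f) : Measurable (liftIco T a f) :=
  (hf.comp measurable_subtype_coe).comp (measurableEquivIco T a).measurable

lemma abs_periodizedBernoulli_one_le (x : UnitAddCircle) : |periodizedBernoulli 1 x| ≤ 1 := by
  obtain ⟨h0, h1⟩ := (equivIco 1 0 x).2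
  change |bernoulliFun 1 (equivIco 1 0 x)| ≤ 1
  rw [bernoulliFun_one, abs_le]
  constructor <;> linarith

lemma memLp_top_periodizedBernoulli_one :
    MemLp (fun x => (periodizedBernoulli 1 x : ℂ)) ∞ (haarAddCircle (T := 1)) :=
  memLp_top_of_bound
    (Complex.measurable_ofReal.comp
      (AddCircle.measurable_liftIco 0 (Polynomial.continuous _).measurable)).aestronglyMeasurable
    1 (.of_forall fun x => by simpa using abs_periodizedBernoulli_one_le x)

def sawtooth : Lp ℂ ∞ (haarAddCircle (T := 1)) := memLp_top_periodizedBernoulli_one.toLp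

-- On the diagonal both sides vanish: `B₁` has mean zero, and `0⁻¹ = 0`.
lemma ent_toeplitz_sawtooth (i j : ℕ) :
    ent (toeplitz sawtooth) i j = (2 * π * Complex.I)⁻¹ * ((i : ℂ) - j)⁻¹ := by
  rw [ent_toeplitz, sawtooth, fourierCoeff_congr_ae memLp_top_periodizedBernoulli_one.coeFn_toLp]
  have := fourierCoeff_bernoulli_eq one_ne_zero ((i : ℤ) - j)
  simp only [Function.comp_def] at this
  rw [this]
  simp only [Nat.factorial_one, Nat.cast_one, Int.cast_sub, Int.cast_natCast, pow_one, map_div₀,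
    map_neg, map_one, map_mul, map_ofNat, Complex.conj_ofReal, Complex.conj_I, mul_neg, map_sub,
    map_natCast, neg_mul, neg_div_neg_eq, one_div, mul_inv_rev]
  ring

lemma harmonic_mono : Monotone harmonic :=
  monotone_nat_of_le_succ fun n => by rw [harmonic_succ]; exact le_add_of_nonneg_right (by positivity)

lemma harmonic_nonneg (n : ℕ) : 0 ≤ harmonic n := harmonic_zero ▸ harmonic_mono n.zero_le

lemma sum_range_succ_inv_sub_eq_harmonic (i : ℕ) :
    ∑ j ∈ range (i + 1), ((i : ℂ) - j)⁻¹ = harmonic i := calc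
  _ = ∑ j ∈ range (i + 1), ((i + 1 - 1 - j : ℕ) : ℂ)⁻¹ := sum_congr rfl fun j hj => by
    rw [add_tsub_cancel_right, Nat.cast_sub (Nat.lt_succ_iff.mp (mem_range.mp hj))]
  _ = ∑ k ∈ range (i + 1), (k : ℂ)⁻¹ := sum_range_reflect (fun k => (k : ℂ)⁻¹) (i + 1)
  _ = harmonic i := by simp [sum_range_succ', harmonic]

lemma sum_lowerTriangle_inv_sub_eq_sum_harmonic (n : ℕ) :
    ∑ i ∈ range n, ∑ j ∈ range n, (if j ≤ i then ((i : ℂ) - j)⁻¹ else 0) =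
      ∑ i ∈ range n, (harmonic i : ℂ) := by
  refine sum_congr rfl fun i hi => ?_
  rw [← sum_filter, ← sum_range_succ_inv_sub_eq_harmonic]
  congr 1
  ext j
  simp only [mem_filter, mem_range] at hi ⊢
  omega

lemma not_sum_harmonic_le_mul (C : ℝ) : ¬ ∀ n, ∑ i ∈ range n, (harmonic i : ℝ) ≤ C * n := by
  intro h
  have hm : ∀ m : ℕ, m * (harmonic m : ℝ) ≤ m * (2 * C) := fun m => calc
    m * (harmonic m : ℝ) = ∑ i ∈ Ico m (2 * m), (harmonic m : ℝ) := by
      rw [sum_const, Nat.card_Ico, nsmul_eq_mul, two_mul, Nat.add_sub_cancel]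
    _ ≤ ∑ i ∈ Ico m (2 * m), (harmonic i : ℝ) := sum_le_sum fun i hi => by
      exact_mod_cast harmonic_mono (mem_Ico.mp hi).1
    _ ≤ ∑ i ∈ range (2 * m), (harmonic i : ℝ) := by
      rw [range_eq_Ico]
      exact sum_le_sum_of_subset_of_nonneg (Ico_subset_Ico_left m.zero_le) fun i _ _ => by
        exact_mod_cast harmonic_nonneg i
    _ ≤ m * (2 * C) := by
      convert h (2 * m) using 1
      push_cast
      ring
  obtain ⟨m, hm_gt⟩ := exists_nat_gt (Real.exp (2 * C))
  have hm_pos : (0 : ℝ) < m := (Real.exp_pos _).trans hm_gt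
  have hlog : 2 * C < Real.log (m + 1) :=
    (Real.lt_log_iff_exp_lt (by positivity)).mpr (by linarith)
  have hharm : Real.log (m + 1) ≤ harmonic m := by exact_mod_cast log_add_one_le_harmonic m
  linarith [le_of_mul_le_mul_left (hm m) hm_pos]

theorem not_exists_ent_eq_lowerTriangle_toeplitz_sawtooth :
    ¬ ∃ B : l2 →L[ℂ] l2, ∀ i j,
      ent B i j = (if j ≤ i then (1 : ℂ) else 0) * ent (toeplitz sawtooth) i j := by
  rintro ⟨B, hB⟩
  have hsum : ∀ n, ∑ i ∈ range n, ∑ j ∈ range n, ent B i j =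
      (2 * π * Complex.I)⁻¹ * ∑ i ∈ range n, (harmonic i : ℂ) := fun n => by
    simp only [hB, ent_toeplitz_sawtooth, ite_mul, one_mul, zero_mul, ← mul_ite_zero, ← mul_sum,
      sum_lowerTriangle_inv_sub_eq_sum_harmonic]
  refine not_sum_harmonic_le_mul (2 * π * ‖B‖) fun n => ?_
  have hnorm : ‖(2 * π * Complex.I)⁻¹ * ∑ i ∈ range n, (harmonic i : ℂ)‖ =
      (2 * π)⁻¹ * ∑ i ∈ range n, (harmonic i : ℝ) := by
    have : ∑ i ∈ range n, (harmonic i : ℂ) = ((∑ i ∈ range n, (harmonic i : ℝ) : ℝ) : ℂ) := by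
      push_cast; rfl
    rw [this, norm_mul, Complex.norm_real,
      Real.norm_of_nonneg (sum_nonneg fun i _ => by exact_mod_cast harmonic_nonneg i)]
    simp [abs_of_pos Real.pi_pos]
  have hbound := norm_sum_ent_le B n
  rwa [hsum, hnorm, inv_mul_le_iff₀ (by positivity), ← mul_assoc] at hbound

/-- The characteristic function of the "triangle" `Δ = {(i,j) : j ≤ i}` is
not a Schur multiplier: there is a bounded operator `A` on `ℓ²` such that no bounded
operator has matrix `(χ_Δ(i,j)·⟪A e_j, e_i⟫)`. In particular there are bounded functions
on `ℕ × ℕ` that are not Schur multipliers. -/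
theorem triangle_truncation_not_schur_multiplier :
    (∃ A : l2 →L[ℂ] l2, ¬ ∃ B : l2 →L[ℂ] l2,
        ∀ i j, ent B i j = (if j ≤ i then (1 : ℂ) else 0) * ent A i j) ∧
    ¬ IsSchurMultiplier (fun p : ℕ × ℕ => if p.2 ≤ p.1 then (1 : ℂ) else 0) ∧
    ∃ φ : ℕ × ℕ → ℂ, (∃ C, ∀ p : ℕ × ℕ, ‖φ p‖ ≤ C) ∧ ¬ IsSchurMultiplier φ := by
  have hχ : ¬ IsSchurMultiplier (fun p : ℕ × ℕ => if p.2 ≤ p.1 then (1 : ℂ) else 0) :=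
    fun h => not_exists_ent_eq_lowerTriangle_toeplitz_sawtooth (h (toeplitz sawtooth))
  refine ⟨⟨_, not_exists_ent_eq_lowerTriangle_toeplitz_sawtooth⟩, hχ, _, ⟨1, fun p => ?_⟩, hχ⟩
  split_ifs <;> simp
end
end
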